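/- Let ū, u_x ∈ ℝ, and for each i in a finite nonempty index set let d_i := x_i - x_0 ∈ ℝ and let bounds u_i^min ≤ ū ≤ u_i^max be given. Define α_i = min(1, (u_i^max - ū)/(u_x d_i)) if u_x d_i > 0, α_i = 1 if u_x d_i = 0, and α_i = min(1, (u_i^min - ū)/(u_x d_i)) if u_x d_i < 0, and set α = min_i α_i. Then 0 ≤ α ≤ 1 and for every i, u_i^min ≤ ū + α u_x d_i ≤ u_i^max. -/
import Mathlib


/-- Nodal scaling factors in step 1 of the vertex slope limiter: the limited
slope `α` lies in `[0,1]` and enforces the vertexwise bounds. -/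
theorem limiter_scaling_factor
    {ι : Type*} [Fintype ι] [Nonempty ι]
    (ubar ux : ℝ) (d umin umax : ι → ℝ)
    (hb : ∀ i, umin i ≤ ubar ∧ ubar ≤ umax i)
    (α : ι → ℝ)
    (hα : ∀ i, α i =
      if 0 < ux * d i then min 1 ((umax i - ubar) / (ux * d i))
      else if ux * d i = 0 then 1
      else min 1 ((umin i - ubar) / (ux * d i)))
    (A : ℝ) (hA : A = Finset.univ.inf' Finset.univ_nonempty α) :
    (0 ≤ A ∧ A ≤ 1) ∧
      ∀ i, umin i ≤ ubar + A * ux * d i ∧ ubar + A * ux * d i ≤ umax i := by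
  have hnn : ∀ i, 0 ≤ α i := by
    intro i
    rw [hα i]
    split_ifs with h1 h2
    · exact le_min zero_le_one (div_nonneg (by linarith [(hb i).2]) h1.le)
    · exact zero_le_one
    · have hlt : ux * d i < 0 := lt_of_le_of_ne (not_lt.mp h1) h2
      refine le_min zero_le_one ?_
      rw [div_nonneg_iff]
      exact Or.inr ⟨by linarith [(hb i).1], hlt.le⟩
  have hle1 : ∀ i, α i ≤ 1 := by
    intro i
    rw [hα i]
    split_ifs with h1 h2
    · exact min_le_left _ _
    · exact le_refl 1
    · exact min_le_left _ _
  have hAle : ∀ i, A ≤ α i := by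
    intro i
    rw [hA]
    exact Finset.inf'_le _ (Finset.mem_univ i)
  obtain ⟨j, hj⟩ : ∃ j, A = α j := by
    rw [hA]
    obtain ⟨j, _, hj⟩ := Finset.exists_mem_eq_inf' Finset.univ_nonempty α
    exact ⟨j, hj⟩
  have hA0 : 0 ≤ A := hj ▸ hnn j
  have hA1 : A ≤ 1 := hj ▸ hle1 j
  refine ⟨⟨hA0, hA1⟩, fun i => ?_⟩
  rcases lt_trichotomy (ux * d i) 0 with h | h | h
  · constructor
    · -- A * (ux * d i) ≥ α i * (ux * d i) ≥ umin i - ubar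
      have hαi : α i ≤ (umin i - ubar) / (ux * d i) := by
        rw [hα i]
        simp [not_lt.mpr h.le, h.ne]
      have h2 : umin i - ubar ≤ α i * (ux * d i) := (le_div_iff_of_neg h).mp hαi
      nlinarith [hAle i]
    · nlinarith [hAle i, (hb i).2]
  · simp [h, (hb i).1, (hb i).2, mul_assoc]
  · constructor
    · nlinarith [hAle i, (hb i).1]
    · have hαi : α i ≤ (umax i - ubar) / (ux * d i) := by
        rw [hα i]
        simp [h]
      have h2 : α i * (ux * d i) ≤ umax i - ubar := by
        rw [← le_div_iff₀ h]; exact hαi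
      nlinarith [hAle i]
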